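/- arXiv:2510.02344 — 2 statements merged into one kernel-verified Lean document; each statement's English description precedes it below -/
import Mathlib

section
/- Let b > 0 be a real number and let Q : (-b, b) → ℝ be a twice differentiable function satisfying Q''(s) - (s/(b² - s²))·Q'(s) + (1/(b² - s²))·Q(s) = 0 for all s ∈ (-b, b). Then there exist real constants k₁, k₂ such that Q(s) = k₁·s + k₂·√(b² - s²) for all s ∈ (-b, b). -/
/-! The solutions `s` and `√(b² - s²)` of `(b² - s²) Q'' - s Q' + Q = 0` give, by variation of
constants, two first integrals of the equation: the coefficients `k₁(s)`, `k₂(s)` for which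
`Q = k₁ s + k₂ √(b² - s²)` and `Q' = k₁ - k₂ s / √(b² - s²)` hold at `s`. Their derivatives vanish
on `(-b, b)`, so they are constant there. -/

open Real Set

noncomputable section

namespace SingularODE

def linearCoeff (b : ℝ) (Q Q' : ℝ → ℝ) (s : ℝ) : ℝ :=
  ((b ^ 2 - s ^ 2) * Q' s + s * Q s) / b ^ 2

def sqrtCoeff (b : ℝ) (Q Q' : ℝ → ℝ) (s : ℝ) : ℝ :=
  (Q s - s * Q' s) * √(b ^ 2 - s ^ 2) / b ^ 2

variable {b s : ℝ} {Q Q' : ℝ → ℝ}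

lemma eq_linearCoeff_mul_add_sqrtCoeff_mul (hb : b ≠ 0) (hs : s ^ 2 < b ^ 2) :
    Q s = linearCoeff b Q Q' s * s + sqrtCoeff b Q Q' s * √(b ^ 2 - s ^ 2) := by
  have hsq : √(b ^ 2 - s ^ 2) ^ 2 = b ^ 2 - s ^ 2 := sq_sqrt (by linarith)
  unfold linearCoeff sqrtCoeff
  field_simp
  linear_combination (s * Q' s - Q s) * hsq

lemma hasDerivAt_sq_sub_sq (b s : ℝ) :
    HasDerivAt (fun s : ℝ ↦ b ^ 2 - s ^ 2) (-(2 * s)) s := by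
  simpa using (hasDerivAt_pow 2 s).const_sub (b ^ 2)

lemma hasDerivAt_sqrt_sq_sub_sq (hs : s ^ 2 < b ^ 2) :
    HasDerivAt (fun s : ℝ ↦ √(b ^ 2 - s ^ 2)) (-s / √(b ^ 2 - s ^ 2)) s := by
  have hpos : 0 < √(b ^ 2 - s ^ 2) := sqrt_pos.mpr (by linarith)
  refine ((hasDerivAt_sq_sub_sq b s).sqrt (by linarith)).congr_deriv ?_
  field_simp

section FirstIntegrals

variable {q'' : ℝ} (hQ : HasDerivAt Q (Q' s) s) (hQ' : HasDerivAt Q' q'' s)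
  (hode : (b ^ 2 - s ^ 2) * q'' = s * Q' s - Q s)
include hQ hQ' hode

lemma hasDerivAt_linearCoeff (hb : b ≠ 0) : HasDerivAt (linearCoeff b Q Q') 0 s := by
  refine ((((hasDerivAt_sq_sub_sq b s).mul hQ').add ((hasDerivAt_id' s).mul hQ)).div_const
    (b ^ 2)).congr_deriv ?_
  field_simp
  linear_combination hode

lemma hasDerivAt_sqrtCoeff (hb : b ≠ 0) (hs : s ^ 2 < b ^ 2) :
    HasDerivAt (sqrtCoeff b Q Q') 0 s := by
  have hpos : 0 < √(b ^ 2 - s ^ 2) := sqrt_pos.mpr (by linarith)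
  have hsq : √(b ^ 2 - s ^ 2) ^ 2 = b ^ 2 - s ^ 2 := sq_sqrt (by linarith)
  refine (((hQ.sub ((hasDerivAt_id' s).mul hQ')).mul (hasDerivAt_sqrt_sq_sub_sq hs)).div_const
    (b ^ 2)).congr_deriv ?_
  simp only [Pi.sub_apply, Pi.mul_apply]
  field_simp
  linear_combination -s * hode - s * q'' * hsq

end FirstIntegrals

lemma eq_of_hasDerivAt_zero_on_Ioo {f : ℝ → ℝ} (hf : ∀ x ∈ Ioo (-b) b, HasDerivAt f 0 x)
    (hs : s ∈ Ioo (-b) b) : f s = f 0 :=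
  isOpen_Ioo.is_const_of_deriv_eq_zero isPreconnected_Ioo
    (fun x hx ↦ (hf x hx).differentiableAt.differentiableWithinAt) (fun x hx ↦ (hf x hx).deriv)
    hs ⟨by linarith [hs.1, hs.2], by linarith [hs.1, hs.2]⟩

end SingularODE

end

open SingularODE in
/-- The ODE `Q'' - (s/(b²-s²))Q' + (1/(b²-s²))Q = 0` on `(-b, b)` has general
solution `Q(s) = k₁ s + k₂ √(b² - s²)`. -/
theorem stmt_0 (b : ℝ) (hb : 0 < b) (Q : ℝ → ℝ)
    (hQ1 : ∀ s ∈ Set.Ioo (-b) b, DifferentiableAt ℝ Q s)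
    (hQ2 : ∀ s ∈ Set.Ioo (-b) b, DifferentiableAt ℝ (deriv Q) s)
    (hODE : ∀ s ∈ Set.Ioo (-b) b,
      deriv (deriv Q) s - (s / (b ^ 2 - s ^ 2)) * deriv Q s
        + (1 / (b ^ 2 - s ^ 2)) * Q s = 0) :
    ∃ k₁ k₂ : ℝ, ∀ s ∈ Set.Ioo (-b) b,
      Q s = k₁ * s + k₂ * Real.sqrt (b ^ 2 - s ^ 2) := by
  have hsq : ∀ s ∈ Set.Ioo (-b) b, s ^ 2 < b ^ 2 := fun s hs ↦ sq_lt_sq' hs.1 hs.2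
  have hode : ∀ s ∈ Set.Ioo (-b) b,
      (b ^ 2 - s ^ 2) * deriv (deriv Q) s = s * deriv Q s - Q s := by
    intro s hs
    have hne : b ^ 2 - s ^ 2 ≠ 0 := by linarith [hsq s hs]
    have h := hODE s hs
    field_simp at h
    linear_combination h
  have hb0 := hb.ne'
  refine ⟨linearCoeff b Q (deriv Q) 0, sqrtCoeff b Q (deriv Q) 0, fun s hs ↦ ?_⟩
  rw [← eq_of_hasDerivAt_zero_on_Ioo (fun x hx ↦ hasDerivAt_linearCoeff (hQ1 x hx).hasDerivAt
      (hQ2 x hx).hasDerivAt (hode x hx) hb0) hs,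
    ← eq_of_hasDerivAt_zero_on_Ioo (fun x hx ↦ hasDerivAt_sqrtCoeff (hQ1 x hx).hasDerivAt
      (hQ2 x hx).hasDerivAt (hode x hx) hb0 (hsq x hx)) hs]
  exact eq_linearCoeff_mul_add_sqrtCoeff_mul hb0 (hsq s hs)
end

section
/- Contraction of the second vertical derivative of αQ with b: with notation as above and b² = a^{ij}b_ib_j, one has (αQ)_{.j.k}·b^j·b^k = ((b² − s²)/α)·(Q − sQ' + (b² − s²)Q''), using α_{.j.k}b^jb^k = (b² − s²)/α and s_{.j}b^j = (b² − s²)/α. -/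
open Matrix

/-- Vertical (y-)partial derivative of a function on `ℝⁿ \ {0}`. -/
noncomputable def pd {n : ℕ} (f : (Fin n → ℝ) → ℝ) (i : Fin n) :
    (Fin n → ℝ) → ℝ :=
  fun z => fderiv ℝ f z (Pi.single i 1)


lemma oneD_hasDeriv (A0 B C : ℝ) (Q : ℝ → ℝ) (hQ : ContDiff ℝ (⊤ : ℕ∞) Q)
    {t : ℝ} (hP : 0 < A0 + 2*B*t + C*t^2) :
    HasDerivAt (fun t => Real.sqrt (A0 + 2*B*t + C*t^2) *
        Q ((B + C*t)/Real.sqrt (A0 + 2*B*t + C*t^2)))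
      (((B + C*t)/Real.sqrt (A0 + 2*B*t + C*t^2)) *
          Q ((B + C*t)/Real.sqrt (A0 + 2*B*t + C*t^2))
        + (C - ((B + C*t)/Real.sqrt (A0 + 2*B*t + C*t^2))^2) *
          deriv Q ((B + C*t)/Real.sqrt (A0 + 2*B*t + C*t^2))) t := by
  have hr0 : Real.sqrt (A0 + 2*B*t + C*t^2) ≠ 0 := by positivity
  have hrpos : 0 < Real.sqrt (A0 + 2*B*t + C*t^2) := Real.sqrt_pos.mpr hP
  set r : ℝ := Real.sqrt (A0 + 2*B*t + C*t^2) with hrdef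
  have hsq : r ^ 2 = A0 + 2*B*t + C*t^2 := Real.sq_sqrt hP.le
  have hP' : HasDerivAt (fun t : ℝ => A0 + 2*B*t + C*t^2) (2*B + 2*C*t) t := by
    have h1 : HasDerivAt (fun t : ℝ => A0 + 2*B*t + C*t^2)
        (0 + 2*B*1 + C*(2*t^1)) t := by
      exact ((hasDerivAt_const t A0).add (((hasDerivAt_id t)).const_mul (2*B))).add
        ((hasDerivAt_pow 2 t).const_mul C)
    convert h1 using 1; push_cast; ring
  have hr : HasDerivAt (fun t : ℝ => Real.sqrt (A0 + 2*B*t + C*t^2)) ((B + C*t)/r) t := by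
    have := hP'.sqrt hP.ne'
    convert this using 1
    rw [← hrdef]
    field_simp
  have hnum : HasDerivAt (fun t : ℝ => B + C*t) C t := by
    simpa using ((hasDerivAt_id t).const_mul C).const_add B
  have hs : HasDerivAt (fun t : ℝ => (B + C*t)/Real.sqrt (A0 + 2*B*t + C*t^2))
      ((C - ((B + C*t)/r)^2)/r) t := by
    have := hnum.div hr hr0
    refine this.congr_deriv (Eq.symm ?_)
    rw [← hrdef]
    field_simp
  have hQd : Differentiable ℝ Q := hQ.differentiable (by simp)
  have hQs : HasDerivAt (fun t : ℝ => Q ((B + C*t)/Real.sqrt (A0 + 2*B*t + C*t^2)))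
      (deriv Q ((B + C*t)/r) * ((C - ((B + C*t)/r)^2)/r)) t :=
    (hQd _).hasDerivAt.comp t hs
  have := hr.mul hQs
  refine this.congr_deriv (Eq.symm ?_)
  rw [← hrdef]
  field_simp

lemma oneD (A0 B C : ℝ) (hA0 : 0 < A0) (Q : ℝ → ℝ) (hQ : ContDiff ℝ (⊤ : ℕ∞) Q) :
    deriv (deriv (fun t => Real.sqrt (A0 + 2*B*t + C*t^2) *
        Q ((B + C*t)/Real.sqrt (A0 + 2*B*t + C*t^2)))) 0
    = ((C - (B/Real.sqrt A0)^2)/Real.sqrt A0) *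
        (Q (B/Real.sqrt A0) - (B/Real.sqrt A0) * deriv Q (B/Real.sqrt A0)
          + (C - (B/Real.sqrt A0)^2) * deriv (deriv Q) (B/Real.sqrt A0)) := by
  have hVopen : IsOpen {t : ℝ | 0 < A0 + 2*B*t + C*t^2} :=
    isOpen_lt continuous_const (by continuity)
  have h0V : (0:ℝ) ∈ {t : ℝ | 0 < A0 + 2*B*t + C*t^2} := by simp [hA0]
  set s : ℝ → ℝ := fun t => (B + C*t)/Real.sqrt (A0 + 2*B*t + C*t^2) with hsdef
  have hev : deriv (fun t => Real.sqrt (A0 + 2*B*t + C*t^2) * Q (s t))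
      =ᶠ[nhds 0] fun t => s t * Q (s t) + (C - s t^2) * deriv Q (s t) := by
    filter_upwards [hVopen.mem_nhds h0V] with t ht
    exact (oneD_hasDeriv A0 B C Q hQ ht).deriv
  rw [Filter.EventuallyEq.deriv_eq hev]
  -- now compute deriv of D at 0
  have hr00 : Real.sqrt (A0 + 2*B*0 + C*0^2) = Real.sqrt A0 := by norm_num
  have hrA : Real.sqrt A0 ≠ 0 := by positivity
  have hs0 : s 0 = B / Real.sqrt A0 := by simp [hsdef]
  have hP0 : 0 < A0 + 2*B*0 + C*0^2 := by simpa using hA0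
  -- derivative of s at 0
  have hr0' : Real.sqrt (A0 + 2*B*0 + C*0^2) ≠ 0 := by positivity
  have hP' : HasDerivAt (fun t : ℝ => A0 + 2*B*t + C*t^2) (2*B + 2*C*0) 0 := by
    have h1 : HasDerivAt (fun t : ℝ => A0 + 2*B*t + C*t^2)
        (0 + 2*B*1 + C*(2*0^1)) 0 :=
      ((hasDerivAt_const 0 A0).add (((hasDerivAt_id 0)).const_mul (2*B))).add
        ((hasDerivAt_pow 2 0).const_mul C)
    convert h1 using 1; push_cast; ring
  have hr : HasDerivAt (fun t : ℝ => Real.sqrt (A0 + 2*B*t + C*t^2))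
      (B/Real.sqrt A0) 0 := by
    have := hP'.sqrt hP0.ne'
    convert this using 1
    rw [hr00]
    field_simp
    ring
  have hnum : HasDerivAt (fun t : ℝ => B + C*t) C 0 := by
    simpa using ((hasDerivAt_id 0).const_mul C).const_add B
  have hs' : HasDerivAt s ((C - (B/Real.sqrt A0)^2)/Real.sqrt A0) 0 := by
    have h2 := hnum.div hr hr0'
    rw [hsdef]
    have h3 : Real.sqrt A0 ^ 2 = A0 := Real.sq_sqrt hA0.le
    refine h2.congr_deriv (Eq.symm ?_)
    rw [hr00]
    field_simp
    linear_combination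
  set s0 : ℝ := B / Real.sqrt A0 with hs0def
  set d : ℝ := (C - s0^2)/Real.sqrt A0 with hddef
  have hQd : Differentiable ℝ Q := hQ.differentiable (by simp)
  have hQ' : ContDiff ℝ (⊤:ℕ∞) (deriv Q) := (contDiff_infty_iff_deriv.mp hQ).2
  have hQ'd : Differentiable ℝ (deriv Q) := hQ'.differentiable (by simp)
  have hQs : HasDerivAt (fun t => Q (s t)) (deriv Q (s 0) * d) 0 :=
    (hQd _).hasDerivAt.comp 0 hs'
  have hQ's : HasDerivAt (fun t => deriv Q (s t)) (deriv (deriv Q) (s 0) * d) 0 :=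
    (hQ'd _).hasDerivAt.comp 0 hs'
  have hspow : HasDerivAt (fun t => s t ^ 2) (2 * s 0 ^ 1 * d) 0 := hs'.pow 2
  have hD : HasDerivAt (fun t => s t * Q (s t) + (C - s t^2) * deriv Q (s t))
      (d * Q (s 0) + s 0 * (deriv Q (s 0) * d)
        + ((0 - 2 * s 0 ^ 1 * d) * deriv Q (s 0)
            + (C - s 0^2) * (deriv (deriv Q) (s 0) * d))) 0 :=
    (hs'.mul hQs).add (((hasDerivAt_const 0 C).sub hspow).mul hQ's)
  rw [hD.deriv, hs0]
  rw [hs0] at *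
  ring

/-- Contraction of the second vertical derivative of `αQ` with `b`:
`(αQ)_{.j.k} b^j b^k = ((b² − s²)/α)·(Q − sQ' + (b² − s²)Q'')`,
where `b² = a^{ij}b_ib_j` and `b^j = a^{jr}b_r`. -/
theorem stmt_15 {n : ℕ} (a : Matrix (Fin n) (Fin n) ℝ) (ha : a.PosDef)
    (bv : Fin n → ℝ) (y : Fin n → ℝ) (hy : y ≠ 0)
    (Q : ℝ → ℝ) (hQ : ContDiff ℝ (⊤ : ℕ∞) Q)
    (αf sf : (Fin n → ℝ) → ℝ)
    (hα : αf = fun z => Real.sqrt (z ⬝ᵥ a.mulVec z))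
    (hsf : sf = fun z => (bv ⬝ᵥ z) / αf z) :
    (∑ j, ∑ k, pd (pd (fun z => αf z * Q (sf z)) k) j y
        * (a⁻¹.mulVec bv) j * (a⁻¹.mulVec bv) k)
      = ((bv ⬝ᵥ a⁻¹.mulVec bv - (sf y) ^ 2) / αf y)
        * (Q (sf y) - sf y * deriv Q (sf y)
            + (bv ⬝ᵥ a⁻¹.mulVec bv - (sf y) ^ 2) * deriv (deriv Q) (sf y)) := by
  classical
  set u : Fin n → ℝ := a⁻¹.mulVec bv with hudef
  set F : (Fin n → ℝ) → ℝ := fun z => αf z * Q (sf z) with hFdef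
  set U : Set (Fin n → ℝ) := {z | 0 < z ⬝ᵥ a.mulVec z} with hUdef
  -- basic matrix facts
  have hdet : IsUnit a.det := isUnit_iff_isUnit_det _ |>.mp ha.isUnit
  have hau : a.mulVec u = bv := by
    rw [hudef, mulVec_mulVec, Matrix.mul_nonsing_inv a hdet, one_mulVec]
  have haT : aᵀ = a := by
    have := ha.1
    rwa [Matrix.IsHermitian, conjTranspose_eq_transpose_of_trivial] at this
  -- smoothness of the pieces
  have hproj : ∀ i : Fin n, ContDiff ℝ (⊤:ℕ∞) (fun z : Fin n → ℝ => z i) :=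
    fun i => (ContinuousLinearMap.proj i : (Fin n → ℝ) →L[ℝ] ℝ).contDiff
  have hqc : ContDiff ℝ (⊤:ℕ∞) (fun z : Fin n → ℝ => z ⬝ᵥ a.mulVec z) := by
    simp only [dotProduct, Matrix.mulVec]
    exact ContDiff.sum fun i _ => (hproj i).mul
      (ContDiff.sum fun j _ => contDiff_const.mul (hproj j))
  have hbc : ContDiff ℝ (⊤:ℕ∞) (fun z : Fin n → ℝ => bv ⬝ᵥ z) := by
    simp only [dotProduct]
    exact ContDiff.sum fun i _ => contDiff_const.mul (hproj i)
  have hαpos : ∀ z ∈ U, 0 < αf z := by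
    intro z hz; rw [hα]; exact Real.sqrt_pos.mpr hz
  have hαA : ∀ z ∈ U, ContDiffAt ℝ (⊤:ℕ∞) αf z := by
    intro z hz
    rw [hα]
    exact (Real.contDiffAt_sqrt (ne_of_gt hz)).comp z hqc.contDiffAt
  have hsA : ∀ z ∈ U, ContDiffAt ℝ (⊤:ℕ∞) sf z := by
    intro z hz
    rw [hsf]
    exact hbc.contDiffAt.div (hαA z hz) (ne_of_gt (hαpos z hz))
  have hQ' : ContDiff ℝ (⊤:ℕ∞) Q := hQ.of_le (by simp)
  have hFA : ∀ z ∈ U, ContDiffAt ℝ (⊤:ℕ∞) F z := by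
    intro z hz
    exact (hαA z hz).mul (hQ'.contDiffAt.comp z (hsA z hz))
  have hyU : y ∈ U := ha.dotProduct_mulVec_pos hy
  have hUopen : IsOpen U := isOpen_lt continuous_const hqc.continuous
  set G : (Fin n → ℝ) → ((Fin n → ℝ) →L[ℝ] ℝ) := fderiv ℝ F with hGdef
  have hGc : ContDiffAt ℝ (⊤:ℕ∞) G y :=
    (hFA y hyU).fderiv_right (by exact_mod_cast le_top)
  have hGd : DifferentiableAt ℝ G y := hGc.differentiableAt (by simp)
  have hHd : HasFDerivAt G (fderiv ℝ G y) y := hGd.hasFDerivAt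
  set H : (Fin n → ℝ) →L[ℝ] ((Fin n → ℝ) →L[ℝ] ℝ) := fderiv ℝ G y with hHdef
  -- second pd as iterated fderiv
  have hpd : ∀ j k : Fin n, pd (pd F k) j y = (H (Pi.single j 1)) (Pi.single k 1) := by
    intro j k
    have h2 := (ContinuousLinearMap.apply ℝ ℝ (Pi.single k 1 : Fin n → ℝ)).hasFDerivAt.comp y hHd
    have h1 : pd F k = (⇑(ContinuousLinearMap.apply ℝ ℝ (Pi.single k 1 : Fin n → ℝ)) ∘ G) := rfl
    show fderiv ℝ (pd F k) y (Pi.single j 1) = _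
    rw [h1, h2.fderiv]
    rfl
  -- contraction
  have hu_expand : (u : Fin n → ℝ) = ∑ j, u j • (Pi.single j 1 : Fin n → ℝ) := by
    funext i
    simp [Finset.sum_apply, Pi.single_apply]
  have hsum : (∑ j, ∑ k, (H (Pi.single j 1)) (Pi.single k 1) * u j * u k)
      = (H u) u := by
    conv_rhs => rw [hu_expand]
    rw [map_sum]
    simp only [_root_.map_smul, ContinuousLinearMap.coe_sum', Finset.sum_apply,
      ContinuousLinearMap.coe_smul', Pi.smul_apply, map_sum, _root_.map_smul,
      smul_eq_mul, Finset.mul_sum]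
    rw [Finset.sum_comm]
    refine Finset.sum_congr rfl fun j _ => ?_
    refine Finset.sum_congr rfl fun k _ => ?_
    ring
  -- line restriction
  set φ : ℝ → ℝ := fun t => F (y + t • u) with hφdef
  have hL : ∀ t : ℝ, HasDerivAt (fun t : ℝ => y + t • u) u t := by
    intro t
    simpa using (((hasDerivAt_id t).smul_const u).const_add y)
  have hcont : Continuous fun t : ℝ => y + t • u :=
    continuous_const.add (continuous_id.smul continuous_const)
  have hVopen : IsOpen {t : ℝ | y + t • u ∈ U} := hUopen.preimage hcont
  have h0V : (0:ℝ) ∈ {t : ℝ | y + t • u ∈ U} := by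
    simpa using hyU
  have hderφ : ∀ t ∈ {t : ℝ | y + t • u ∈ U}, HasDerivAt φ ((G (y + t • u)) u) t := by
    intro t ht
    exact (((hFA _ ht).differentiableAt (by simp)).hasFDerivAt).comp_hasDerivAt t (hL t)
  have hev : deriv φ =ᶠ[nhds 0] fun t => (G (y + t • u)) u := by
    filter_upwards [hVopen.mem_nhds h0V] with t ht
    exact (hderφ t ht).deriv
  have hHd' : HasFDerivAt G H (y + (0:ℝ) • u) := by simpa using hHd
  have hGL : HasDerivAt (fun t : ℝ => G (y + t • u)) (H u) 0 :=
    hHd'.comp_hasDerivAt 0 (hL 0)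
  have happ : HasDerivAt (fun t : ℝ => (G (y + t • u)) u) ((H u) u) 0 := by
    have := hGL.clm_apply (hasDerivAt_const 0 u)
    simpa using this
  have hfinal1 : deriv (deriv φ) 0 = (H u) u := by
    rw [Filter.EventuallyEq.deriv_eq hev]
    exact happ.deriv
  -- explicit form of φ
  set A0 : ℝ := y ⬝ᵥ a.mulVec y with hA0def
  set B : ℝ := bv ⬝ᵥ y with hBdef
  set Cc : ℝ := bv ⬝ᵥ u with hCdef
  have hub : u ⬝ᵥ a.mulVec y = B := by
    rw [Matrix.dotProduct_mulVec, ← haT, Matrix.vecMul_transpose, hau]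
  have hyb : y ⬝ᵥ bv = B := dotProduct_comm _ _
  have hubv : u ⬝ᵥ bv = Cc := dotProduct_comm _ _
  have hq : ∀ t : ℝ, (y + t • u) ⬝ᵥ a.mulVec (y + t • u) = A0 + 2*B*t + Cc*t^2 := by
    intro t
    have h1 : a.mulVec (y + t • u) = a.mulVec y + t • bv := by
      rw [mulVec_add, mulVec_smul, hau]
    rw [h1, add_dotProduct, smul_dotProduct, dotProduct_add, dotProduct_add,
      dotProduct_smul, dotProduct_smul, hub, hyb, hubv, smul_eq_mul, smul_eq_mul,
      smul_eq_mul]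
    ring
  have hbq : ∀ t : ℝ, bv ⬝ᵥ (y + t • u) = B + Cc*t := by
    intro t
    rw [dotProduct_add, dotProduct_smul, smul_eq_mul]
    ring
  have hφ_eq : φ = fun t => Real.sqrt (A0 + 2*B*t + Cc*t^2) *
      Q ((B + Cc*t)/Real.sqrt (A0 + 2*B*t + Cc*t^2)) := by
    funext t
    show F (y + t • u) = _
    rw [hFdef]
    simp only [hα, hsf, hq t, hbq t]
  have hA0pos : (0:ℝ) < A0 := hyU
  -- put everything together
  have hLHS : (∑ j, ∑ k, pd (pd F k) j y * u j * u k)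
      = ((Cc - (B/Real.sqrt A0)^2)/Real.sqrt A0) *
        (Q (B/Real.sqrt A0) - (B/Real.sqrt A0) * deriv Q (B/Real.sqrt A0)
          + (Cc - (B/Real.sqrt A0)^2) * deriv (deriv Q) (B/Real.sqrt A0)) := by
    have : (∑ j, ∑ k, pd (pd F k) j y * u j * u k) = (H u) u := by
      rw [← hsum]
      refine Finset.sum_congr rfl fun j _ => Finset.sum_congr rfl fun k _ => ?_
      rw [hpd j k]
    rw [this, ← hfinal1, hφ_eq, oneD A0 B Cc hA0pos Q hQ']
  have hsfy : sf y = B / Real.sqrt A0 := by rw [hsf, hα]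
  have hαy : αf y = Real.sqrt A0 := by rw [hα]
  rw [hsfy, hαy] at *
  exact hLHS
end
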